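/- arXiv:2505.10712 — 5 statements merged into one kernel-verified Lean document; each statement's English description precedes it below -/
import Mathlib

section
/- Let $b,\lambda,r>0$ and set $R:=\frac{b+1}{2\sqrt b}$. For $n\ge1$ and $\alpha\in\mathbb{R}$ define $\zeta_{n,\alpha}(\rho):=\alpha^{n-1}\big\{\sqrt b\,\sin[\sqrt\lambda\,(nr-\rho)]+\alpha\,\sin[\sqrt\lambda\,(\rho-(n-1)r)]\big\}$. Then each $\zeta_{n,\alpha}$ satisfies $\zeta_{n,\alpha}''+\lambda\,\zeta_{n,\alpha}=0$ on $\mathbb{R}$ and, for every $n\ge1$, the continuity-type matching $\zeta_{n+1,\alpha}(nr)=\sqrt b\,\zeta_{n,\alpha}(nr)$ holds; if in addition $\alpha^2-2R\cos(\sqrt\lambda\,r)\,\alpha+1=0$, then also the derivative matching $\zeta_{n,\alpha}'(nr)=\sqrt b\,\zeta_{n+1,\alpha}'(nr)$ holds for every $n\ge1$. -/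
private lemma hdsr (s a ρ : ℝ) :
    HasDerivAt (fun x : ℝ => Real.sin (s * (a - x))) (-(s * Real.cos (s * (a - ρ)))) ρ := by
  have h : HasDerivAt (fun x : ℝ => s * (a - x)) (-s) ρ := by
    simpa using ((hasDerivAt_id ρ).const_sub a).const_mul s
  have := (Real.hasDerivAt_sin (s * (a - ρ))).comp ρ h
  simpa [Function.comp_def, mul_comm] using this

private lemma hdsl (s a ρ : ℝ) :
    HasDerivAt (fun x : ℝ => Real.sin (s * (x - a))) (s * Real.cos (s * (ρ - a))) ρ := by
  have h : HasDerivAt (fun x : ℝ => s * (x - a)) s ρ := by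
    simpa using ((hasDerivAt_id ρ).sub_const a).const_mul s
  have := (Real.hasDerivAt_sin (s * (ρ - a))).comp ρ h
  simpa [Function.comp_def, mul_comm] using this

private lemma hdcr (s a ρ : ℝ) :
    HasDerivAt (fun x : ℝ => Real.cos (s * (a - x))) (s * Real.sin (s * (a - ρ))) ρ := by
  have h : HasDerivAt (fun x : ℝ => s * (a - x)) (-s) ρ := by
    simpa using ((hasDerivAt_id ρ).const_sub a).const_mul s
  have := (Real.hasDerivAt_cos (s * (a - ρ))).comp ρ h
  simpa [Function.comp_def, mul_comm] using this

private lemma hdcl (s a ρ : ℝ) :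
    HasDerivAt (fun x : ℝ => Real.cos (s * (x - a))) (-(s * Real.sin (s * (ρ - a)))) ρ := by
  have h : HasDerivAt (fun x : ℝ => s * (x - a)) s ρ := by
    simpa using ((hasDerivAt_id ρ).sub_const a).const_mul s
  have := (Real.hasDerivAt_cos (s * (ρ - a))).comp ρ h
  simpa [Function.comp_def, mul_comm] using this

/-- Explicit generalized eigenfunctions (3.17) on a homogeneous metric tree:
`ζ_{n,α}` solves `ζ'' + λ ζ = 0`, satisfies the continuity-type matching
`ζ_{n+1,α}(nr) = √b ζ_{n,α}(nr)`, and, when `α² - 2R cos(√λ r) α + 1 = 0`,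
also the derivative matching `ζ_{n,α}'(nr) = √b ζ_{n+1,α}'(nr)`. -/
theorem stmt_0 (b lam r : ℝ) (hb : 0 < b) (hlam : 0 < lam) (hr : 0 < r)
    (R : ℝ) (hR : R = (b + 1) / (2 * Real.sqrt b))
    (ζ : ℕ → ℝ → ℝ → ℝ)
    (hζ : ∀ n : ℕ, ∀ α ρ : ℝ, ζ n α ρ =
      α ^ (n - 1) * (Real.sqrt b * Real.sin (Real.sqrt lam * ((n : ℝ) * r - ρ)) +
        α * Real.sin (Real.sqrt lam * (ρ - ((n : ℝ) - 1) * r)))) :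
    (∀ n : ℕ, 1 ≤ n → ∀ α ρ : ℝ,
        deriv (deriv (ζ n α)) ρ + lam * ζ n α ρ = 0) ∧
    (∀ n : ℕ, 1 ≤ n → ∀ α : ℝ,
        ζ (n + 1) α ((n : ℝ) * r) = Real.sqrt b * ζ n α ((n : ℝ) * r)) ∧
    (∀ α : ℝ, α ^ 2 - 2 * R * Real.cos (Real.sqrt lam * r) * α + 1 = 0 →
        ∀ n : ℕ, 1 ≤ n →
          deriv (ζ n α) ((n : ℝ) * r) = Real.sqrt b * deriv (ζ (n + 1) α) ((n : ℝ) * r)) := by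
  set s := Real.sqrt lam with hs
  have hss : s * s = lam := Real.mul_self_sqrt hlam.le
  have hsb : Real.sqrt b * Real.sqrt b = b := Real.mul_self_sqrt hb.le
  have hsb0 : Real.sqrt b ≠ 0 := ne_of_gt (Real.sqrt_pos.mpr hb)
  -- derivative of ζ
  have key : ∀ n : ℕ, ∀ α ρ : ℝ, HasDerivAt (ζ n α)
      (α ^ (n - 1) * (Real.sqrt b * (-(s * Real.cos (s * ((n : ℝ) * r - ρ)))) +
        α * (s * Real.cos (s * (ρ - ((n : ℝ) - 1) * r))))) ρ := by
    intro n α ρ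
    have hfun : ζ n α = fun ρ => α ^ (n - 1) *
        (Real.sqrt b * Real.sin (s * ((n : ℝ) * r - ρ)) +
          α * Real.sin (s * (ρ - ((n : ℝ) - 1) * r))) := funext (hζ n α)
    rw [hfun]
    exact (((hdsr s ((n : ℝ) * r) ρ).const_mul (Real.sqrt b)).add
      ((hdsl s (((n : ℝ) - 1) * r) ρ).const_mul α)).const_mul (α ^ (n - 1))
  have keyd : ∀ n : ℕ, ∀ α : ℝ, deriv (ζ n α) = fun ρ =>
      α ^ (n - 1) * (Real.sqrt b * (-(s * Real.cos (s * ((n : ℝ) * r - ρ)))) +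
        α * (s * Real.cos (s * (ρ - ((n : ℝ) - 1) * r)))) :=
    fun n α => funext fun ρ => (key n α ρ).deriv
  refine ⟨?_, ?_, ?_⟩
  · intro n hn α ρ
    rw [keyd]
    have h2 : HasDerivAt (fun ρ =>
        α ^ (n - 1) * (Real.sqrt b * (-(s * Real.cos (s * ((n : ℝ) * r - ρ)))) +
          α * (s * Real.cos (s * (ρ - ((n : ℝ) - 1) * r)))))
        (α ^ (n - 1) * (Real.sqrt b * (-(s * (s * Real.sin (s * ((n : ℝ) * r - ρ))))) +
          α * (s * (-(s * Real.sin (s * (ρ - ((n : ℝ) - 1) * r))))))) ρ := by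
      exact ((((hdcr s ((n : ℝ) * r) ρ).const_mul s).neg.const_mul (Real.sqrt b)).add
        (((hdcl s (((n : ℝ) - 1) * r) ρ).const_mul s).const_mul α)).const_mul (α ^ (n - 1))
    rw [h2.deriv, hζ]
    linear_combination (-(α ^ (n - 1) * (Real.sqrt b * Real.sin (s * ((n : ℝ) * r - ρ)) +
      α * Real.sin (s * (ρ - ((n : ℝ) - 1) * r))))) * hss
  · intro n hn α
    obtain ⟨m, rfl⟩ : ∃ m, n = m + 1 := ⟨n - 1, (Nat.succ_pred_eq_of_pos hn).symm⟩
    rw [hζ, hζ]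
    simp only [Nat.add_sub_cancel]
    push_cast
    have e1 : s * (((m : ℝ) + 1 + 1) * r - ((m : ℝ) + 1) * r) = s * r := by ring
    have e2 : s * (((m : ℝ) + 1) * r - ((m : ℝ) + 1 + 1 - 1) * r) = 0 := by ring
    have e3 : s * (((m : ℝ) + 1) * r - ((m : ℝ) + 1) * r) = 0 := by ring
    have e4 : s * (((m : ℝ) + 1) * r - ((m : ℝ) + 1 - 1) * r) = s * r := by ring
    rw [e1, e2, e3, e4, Real.sin_zero]
    ring
  · intro α hα n hn
    rw [hR] at hα
    have hα2 : Real.sqrt b * (α ^ 2 + 1) = (b + 1) * Real.cos (s * r) * α := by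
      field_simp at hα
      linear_combination hα
    obtain ⟨m, rfl⟩ : ∃ m, n = m + 1 := ⟨n - 1, (Nat.succ_pred_eq_of_pos hn).symm⟩
    rw [(key (m + 1) α _).deriv, (key (m + 1 + 1) α _).deriv]
    simp only [Nat.add_sub_cancel]
    push_cast
    have e1 : s * (((m : ℝ) + 1) * r - ((m : ℝ) + 1) * r) = 0 := by ring
    have e2 : s * (((m : ℝ) + 1) * r - ((m : ℝ) + 1 - 1) * r) = s * r := by ring
    have e3 : s * (((m : ℝ) + 1 + 1) * r - ((m : ℝ) + 1) * r) = s * r := by ring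
    have e4 : s * (((m : ℝ) + 1) * r - ((m : ℝ) + 1 + 1 - 1) * r) = 0 := by ring
    rw [e1, e2, e3, e4, Real.cos_zero]
    linear_combination (-(α ^ m * s)) * hα2 +
      (α ^ m * s * α * Real.cos (s * r)) * hsb
end

section
/- Let $b\ge2$ be an integer, $r>0$, $R:=\frac{b+1}{2\sqrt b}$, $\theta:=\arccos(1/R)$, and let $\lambda>0$ satisfy $\sqrt\lambda\,r<\theta$. Then $R\cos(\sqrt\lambda r)>1$, and for any $\alpha$ with $\alpha_-\le\alpha<1$, where $\alpha_-:=R\cos(\sqrt\lambda r)-\sqrt{R^2\cos^2(\sqrt\lambda r)-1}$, the functions $g_n(\rho):=\frac{\alpha^{n-1}}{b^{n/2}}\{\sqrt b\sin[\sqrt\lambda(nr-\rho)]+\alpha\sin[\sqrt\lambda(\rho-(n-1)r)]\}$ ($n\ge1$) satisfy: (i) $g_{n+1}(nr)=g_n(nr)$ for all $n\ge1$; (ii) $g_1'(0)=\sqrt{\lambda/b}\,[\alpha-\sqrt b\cos(\sqrt\lambda r)]\le0$; (iii) $g_n'(nr)-b\,g_{n+1}'(nr)=-\sqrt\lambda\,(\alpha/\sqrt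 b)^{n-1}\,[\alpha^2-2R\cos(\sqrt\lambda r)\alpha+1]\ge0$ for all $n\ge1$. -/
set_option maxHeartbeats 1000000

private lemma hasDerivAt_profile (C A B L c d x : ℝ) :
    HasDerivAt (fun ρ => C * (A * Real.sin (L * (c - ρ)) + B * Real.sin (L * (ρ - d))))
      (C * (A * (Real.cos (L * (c - x)) * (-L)) + B * (Real.cos (L * (x - d)) * L))) x := by
  have h1 : HasDerivAt (fun ρ : ℝ => L * (c - ρ)) (-L) x := by
    simpa using ((hasDerivAt_const x c).sub (hasDerivAt_id x)).const_mul L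
  have h2 : HasDerivAt (fun ρ : ℝ => L * (ρ - d)) L x := by
    simpa using ((hasDerivAt_id x).sub_const d).const_mul L
  have hs1 := (Real.hasDerivAt_sin (L * (c - x))).comp x h1
  have hs2 := (Real.hasDerivAt_sin (L * (x - d))).comp x h2
  exact ((hs1.const_mul A).add (hs2.const_mul B)).const_mul C

/-- From Lemma 5.1: on a homogeneous tree with branching number `b` and edge length `r`,
if `√λ r < θ = arccos(1/R)` then `R cos(√λ r) > 1`, and for `α₋ ≤ α < 1` the profile
`gₙ` is continuous at the vertices, has nonpositive Neumann datum at the root, and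
satisfies the Kirchhoff-type inequality `gₙ'(nr) ≥ b g_{n+1}'(nr)`. -/
theorem stmt_6 (b : ℕ) (hb : 2 ≤ b) (r lam : ℝ) (hr : 0 < r) (hlam : 0 < lam)
    (R θ : ℝ)
    (hR : R = ((b : ℝ) + 1) / (2 * Real.sqrt b))
    (hθ : θ = Real.arccos (1 / R))
    (hlt : Real.sqrt lam * r < θ)
    (α : ℝ)
    (hα1 : R * Real.cos (Real.sqrt lam * r) -
      Real.sqrt (R ^ 2 * Real.cos (Real.sqrt lam * r) ^ 2 - 1) ≤ α)
    (hα2 : α < 1)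
    (g : ℕ → ℝ → ℝ)
    (hg : ∀ n : ℕ, ∀ ρ : ℝ, g n ρ =
      α ^ (n - 1) / ((b : ℝ) ^ ((n : ℝ) / 2)) *
        (Real.sqrt b * Real.sin (Real.sqrt lam * ((n : ℝ) * r - ρ)) +
          α * Real.sin (Real.sqrt lam * (ρ - ((n : ℝ) - 1) * r)))) :
    1 < R * Real.cos (Real.sqrt lam * r) ∧
    (∀ n : ℕ, 1 ≤ n → g (n + 1) ((n : ℝ) * r) = g n ((n : ℝ) * r)) ∧
    (deriv (g 1) 0 = Real.sqrt (lam / (b : ℝ)) *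
        (α - Real.sqrt b * Real.cos (Real.sqrt lam * r)) ∧
      deriv (g 1) 0 ≤ 0) ∧
    (∀ n : ℕ, 1 ≤ n →
      deriv (g n) ((n : ℝ) * r) - (b : ℝ) * deriv (g (n + 1)) ((n : ℝ) * r) =
        -Real.sqrt lam * (α / Real.sqrt b) ^ (n - 1) *
          (α ^ 2 - 2 * R * Real.cos (Real.sqrt lam * r) * α + 1) ∧
      0 ≤ deriv (g n) ((n : ℝ) * r) - (b : ℝ) * deriv (g (n + 1)) ((n : ℝ) * r)) := by
  set L : ℝ := Real.sqrt lam with hLdef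
  set s : ℝ := Real.sqrt b with hsdef
  set c : ℝ := Real.cos (L * r) with hcdef
  clear_value L s c
  have hb0 : (0:ℝ) ≤ (b:ℝ) := by positivity
  have hb2R : (2:ℝ) ≤ (b:ℝ) := by exact_mod_cast hb
  have hs0 : 0 < s := hsdef ▸ Real.sqrt_pos.2 (by linarith)
  have hs2 : s ^ 2 = (b:ℝ) := hsdef ▸ Real.sq_sqrt hb0
  have hL0 : 0 < L := hLdef ▸ Real.sqrt_pos.2 hlam
  have hbn : ∀ n : ℕ, (b:ℝ) ^ ((n:ℝ)/2) = s ^ n := by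
    intro n
    rw [hsdef, show ((n:ℝ)/2) = (1/2) * n by ring, Real.rpow_mul hb0, ← Real.sqrt_eq_rpow,
      Real.rpow_natCast]
  -- R ≥ 1 and basic facts
  have hR1 : 1 ≤ R := by
    rw [hR, le_div_iff₀ (by positivity)]
    nlinarith [sq_nonneg (s - 1)]
  have hR0 : 0 < R := by linarith
  -- 1 < R * c
  have hK : 1 < R * c := by
    have hinv1 : 1 / R ≤ 1 := by
      rw [div_le_one hR0]; exact hR1
    have hinv0 : 0 < 1 / R := by positivity
    have hcosθ : Real.cos θ = 1 / R := by
      rw [hθ, Real.cos_arccos (by linarith) hinv1]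
    have hLr0 : 0 ≤ L * r := by positivity
    have hθπ : θ ≤ Real.pi := hθ ▸ Real.arccos_le_pi _
    have hmono : Real.cos θ < Real.cos (L * r) :=
      Real.cos_lt_cos_of_nonneg_of_le_pi hLr0 hθπ hlt
    rw [hcosθ, ← hcdef] at hmono
    calc 1 = R * (1 / R) := by field_simp
    _ < R * c := by exact mul_lt_mul_of_pos_left hmono hR0
  have hc0 : 0 < c := by
    have : 0 < 1 / R := by positivity
    nlinarith
  -- α > 0
  have hD2 : Real.sqrt (R ^ 2 * c ^ 2 - 1) ^ 2 = R ^ 2 * c ^ 2 - 1 :=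
    Real.sq_sqrt (by nlinarith)
  have hD0 : 0 ≤ Real.sqrt (R ^ 2 * c ^ 2 - 1) := Real.sqrt_nonneg _
  have hDlt : Real.sqrt (R ^ 2 * c ^ 2 - 1) < R * c := by
    nlinarith
  have hα0 : 0 < α := by
    have := hα1; nlinarith
  -- quadratic inequality
  have hquad : α ^ 2 - 2 * R * c * α + 1 ≤ 0 := by
    set D := Real.sqrt (R ^ 2 * c ^ 2 - 1) with hDdef
    have h1 : 0 ≤ α - (R * c - D) := by linarith
    have h2 : 0 ≤ (R * c + D) - α := by nlinarith
    have hexp : (α - (R * c - D)) * ((R * c + D) - α) =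
        2 * R * c * α - α ^ 2 - R ^ 2 * c ^ 2 + D ^ 2 := by ring
    have hprod := mul_nonneg h1 h2
    rw [hexp, hD2] at hprod
    linarith
  -- s * c ≥ 1 (so α < s * c)
  have hsc : 1 ≤ s * c := by
    have h2s : 2 * s < ((b:ℝ) + 1) * c := by
      have : 1 < ((b:ℝ) + 1) / (2 * s) * c := hR ▸ hK
      rw [div_mul_eq_mul_div, lt_div_iff₀ (by positivity)] at this
      linarith
    have h3 : 2 * (b:ℝ) < ((b:ℝ) + 1) * (s * c) := by
      nlinarith [mul_lt_mul_of_pos_left h2s hs0]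
    nlinarith [h3, hb2R]
  -- generic derivative formula
  have hgfun : ∀ n : ℕ, g n = fun ρ =>
      α ^ (n - 1) / ((b : ℝ) ^ ((n : ℝ) / 2)) *
        (s * Real.sin (L * ((n : ℝ) * r - ρ)) +
          α * Real.sin (L * (ρ - ((n : ℝ) - 1) * r))) := fun n => funext (hg n)
  have hderiv : ∀ (n : ℕ) (x : ℝ), deriv (g n) x =
      α ^ (n - 1) / s ^ n *
        (s * (Real.cos (L * ((n : ℝ) * r - x)) * (-L)) +
          α * (Real.cos (L * (x - ((n : ℝ) - 1) * r)) * L)) := by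
    intro n x
    rw [hgfun n, ← hbn n]
    exact (hasDerivAt_profile _ s α L _ _ x).deriv
  refine ⟨hK, ?_, ⟨?_, ?_⟩, ?_⟩
  · -- continuity at vertices
    intro n hn
    obtain ⟨m, rfl⟩ := Nat.exists_eq_add_of_le hn
    rw [hg, hg, hbn, hbn]
    push_cast
    have e1 : L * ((1 + (m:ℝ) + 1) * r - (1 + (m:ℝ)) * r) = L * r := by ring
    have e2 : L * ((1 + (m:ℝ)) * r - (1 + (m:ℝ) + 1 - 1) * r) = L * 0 := by ring
    have e3 : L * ((1 + (m:ℝ)) * r - (1 + (m:ℝ)) * r) = L * 0 := by ring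
    have e4 : L * ((1 + (m:ℝ)) * r - (1 + (m:ℝ) - 1) * r) = L * r := by ring
    rw [e1, e2, e3, e4, mul_zero, Real.sin_zero]
    simp only [show 1 + m - 1 = m from by omega, show 1 + m + 1 - 1 = m + 1 from by omega]
    field_simp
    ring
  · -- value of deriv (g 1) 0
    rw [hderiv 1 0]
    simp only [Nat.cast_one]
    have e1 : L * ((1:ℝ) * r - 0) = L * r := by ring
    have e2 : L * ((0:ℝ) - ((1:ℝ) - 1) * r) = L * 0 := by ring
    rw [e1, e2, mul_zero, Real.cos_zero, ← hcdef]
    have hdiv : Real.sqrt (lam / b) = L / s := by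
      rw [hLdef, hsdef]; exact Real.sqrt_div hlam.le b
    rw [hdiv]
    norm_num
    field_simp
    ring
  · -- deriv (g 1) 0 ≤ 0
    rw [hderiv 1 0]
    simp only [Nat.cast_one]
    have e1 : L * ((1:ℝ) * r - 0) = L * r := by ring
    have e2 : L * ((0:ℝ) - ((1:ℝ) - 1) * r) = L * 0 := by ring
    rw [e1, e2, mul_zero, Real.cos_zero, ← hcdef]
    have hαsc : α - s * c ≤ 0 := by nlinarith
    have h1 : (0:ℝ) ≤ 1 / s := by positivity
    have h2 : (1:ℝ) / s * (L * (α - s * c)) ≤ 0 :=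
      mul_nonpos_of_nonneg_of_nonpos h1 (mul_nonpos_of_nonneg_of_nonpos hL0.le hαsc)
    have hgoal : α ^ (1 - 1) / s ^ 1 * (s * (c * -L) + α * (1 * L)) =
        1 / s * (L * (α - s * c)) := by
      simp only [Nat.sub_self, pow_zero, pow_one]
      ring
    rw [hgoal]
    exact h2
  · -- Kirchhoff
    intro n hn
    obtain ⟨m, rfl⟩ := Nat.exists_eq_add_of_le hn
    rw [hderiv, hderiv]
    push_cast
    have e1 : L * ((1 + (m:ℝ)) * r - (1 + (m:ℝ)) * r) = L * 0 := by ring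
    have e2 : L * ((1 + (m:ℝ)) * r - (1 + (m:ℝ) - 1) * r) = L * r := by ring
    have e3 : L * ((1 + (m:ℝ) + 1) * r - (1 + (m:ℝ)) * r) = L * r := by ring
    have e4 : L * ((1 + (m:ℝ)) * r - (1 + (m:ℝ) + 1 - 1) * r) = L * 0 := by ring
    rw [e1, e2, e3, e4, mul_zero, Real.cos_zero, ← hcdef]
    simp only [show 1 + m - 1 = m from by omega, show 1 + m + 1 - 1 = m + 1 from by omega]
    have key : α ^ m / s ^ (1 + m) * (s * (1 * -L) + α * (c * L)) -
        (b:ℝ) * (α ^ (1 + m) / s ^ (1 + m + 1) * (s * (c * -L) + α * (1 * L))) =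
        -L * (α / s) ^ m * (α ^ 2 - 2 * R * c * α + 1) := by
      rw [hR, div_pow, ← hs2]
      have hsm : s ^ m ≠ 0 := pow_ne_zero _ hs0.ne'
      field_simp
      ring
    refine ⟨key, ?_⟩
    rw [key]
    have hp : 0 ≤ (α / s) ^ m := by positivity
    have h5 : 0 ≤ L * (α / s) ^ m * -(α ^ 2 - 2 * R * c * α + 1) :=
      mul_nonneg (mul_nonneg hL0.le hp) (by linarith)
    nlinarith [h5]
end

section
/- In the setting of Lemma 5.1 (integer $b\ge2$, $r>0$, $R=\frac{b+1}{2\sqrt b}$, $\theta=\arccos(1/R)$, $0<\sqrt\lambda\,r<\theta$, $\alpha\in[\alpha_-,1)$ with $\alpha_-=R\cos(\sqrt\lambda r)-\sqrt{R^2\cos^2(\sqrt\lambda r)-1}$, and $g_n(\rho)=\frac{\alpha^{n-1}}{b^{n/2}}\{\sqrt b\sin[\sqrt\lambda(nr-\rho)]+\alpha\sin[\sqrt\lambda(\rho-(n-1)r)]\}$), for every $n\ge1$ and every $\rho\in[(n-1)r,\,nr]$ one has $0<g_n(\rho)\le(\alpha/\sqrt b)^{n-1}\le1$ and $g_n'(\rho)\le0$.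 -/
set_option maxHeartbeats 1600000 in
/-- From Lemma 5.1: positivity, the pointwise bound `0 < gₙ ≤ (α/√b)^{n-1} ≤ 1` and
monotonicity `gₙ' ≤ 0` of the explicit supersolution profile on each edge interval. -/
theorem stmt_7 (b : ℕ) (hb : 2 ≤ b) (r lam : ℝ) (hr : 0 < r) (hlam : 0 < lam)
    (R θ : ℝ)
    (hR : R = ((b : ℝ) + 1) / (2 * Real.sqrt b))
    (hθ : θ = Real.arccos (1 / R))
    (hlt : Real.sqrt lam * r < θ)
    (α : ℝ)
    (hα1 : R * Real.cos (Real.sqrt lam * r) -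
      Real.sqrt (R ^ 2 * Real.cos (Real.sqrt lam * r) ^ 2 - 1) ≤ α)
    (hα2 : α < 1)
    (g : ℕ → ℝ → ℝ)
    (hg : ∀ n : ℕ, ∀ ρ : ℝ, g n ρ =
      α ^ (n - 1) / ((b : ℝ) ^ ((n : ℝ) / 2)) *
        (Real.sqrt b * Real.sin (Real.sqrt lam * ((n : ℝ) * r - ρ)) +
          α * Real.sin (Real.sqrt lam * (ρ - ((n : ℝ) - 1) * r)))) :
    ∀ n : ℕ, 1 ≤ n → ∀ ρ ∈ Set.Icc (((n : ℝ) - 1) * r) ((n : ℝ) * r),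
      0 < g n ρ ∧ g n ρ ≤ (α / Real.sqrt b) ^ (n - 1) ∧
        (α / Real.sqrt b) ^ (n - 1) ≤ 1 ∧ deriv (g n) ρ ≤ 0 := by
  have hbR : (2:ℝ) ≤ (b:ℝ) := by exact_mod_cast hb
  have hb1 : (1:ℝ) < (b:ℝ) := by linarith
  have hsb1 : 1 < Real.sqrt b := by
    have : Real.sqrt 1 < Real.sqrt b := Real.sqrt_lt_sqrt (by norm_num) hb1
    simpa using this
  have hsb0 : 0 < Real.sqrt b := by linarith
  have hsbsq : Real.sqrt b ^ 2 = (b:ℝ) := Real.sq_sqrt (by linarith)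
  have hR1 : 1 < R := by
    rw [hR, lt_div_iff₀ (by positivity)]
    have h := mul_pos (sub_pos.2 hsb1) (sub_pos.2 hsb1)
    nlinarith [h, hsbsq]
  have hR0 : 0 < R := by linarith
  have hinv1 : 1 / R < 1 := by rw [div_lt_one hR0]; exact hR1
  have hinv0 : 0 < 1 / R := by positivity
  have hθ2 : θ < Real.pi / 2 := by
    rw [hθ]; exact (Real.arccos_lt_pi_div_two).2 hinv0
  have hθπ : θ ≤ Real.pi := by rw [hθ]; exact Real.arccos_le_pi _
  set S := Real.sqrt lam with hS
  have hS0 : 0 < S := Real.sqrt_pos.2 hlam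
  set s := S * r with hs
  have hs0 : 0 < s := mul_pos hS0 hr
  have hs2 : s < Real.pi / 2 := lt_trans hlt hθ2
  have hsπ : s < Real.pi := by linarith [Real.pi_pos]
  have hcosθ : Real.cos θ = 1 / R := by
    rw [hθ]; exact Real.cos_arccos (by linarith) (by linarith)
  have hcs : 1 / R < Real.cos s := by
    have := Real.cos_lt_cos_of_nonneg_of_le_pi hs0.le hθπ hlt
    rwa [hcosθ] at this
  have hcs0 : 0 < Real.cos s := lt_trans hinv0 hcs
  have hRcs : 1 < R * Real.cos s := by
    have := (div_lt_iff₀ hR0).mp hcs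
    linarith [this]
  have hRle : R ≤ Real.sqrt b := by
    rw [hR, div_le_iff₀ (by positivity)]
    nlinarith [hsbsq, hbR]
  have hkey : 1 < Real.sqrt b * Real.cos s := by
    have h1 : 1 / Real.sqrt b ≤ 1 / R := one_div_le_one_div_of_le hR0 hRle
    have h2 : 1 / Real.sqrt b < Real.cos s := lt_of_le_of_lt h1 hcs
    have h3 := (div_lt_iff₀ hsb0).mp h2
    linarith
  have hα0 : 0 < α := by
    have hx : 0 ≤ (R * Real.cos s) ^ 2 - 1 := by
      have h := mul_le_mul hRcs.le hRcs.le zero_le_one (le_trans zero_le_one hRcs.le)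
      nlinarith [h]
    have hsq : Real.sqrt (R ^ 2 * Real.cos s ^ 2 - 1) < R * Real.cos s := by
      have h1 : R ^ 2 * Real.cos s ^ 2 - 1 = (R * Real.cos s) ^ 2 - 1 := by ring
      rw [h1]
      calc Real.sqrt ((R * Real.cos s) ^ 2 - 1)
          < Real.sqrt ((R * Real.cos s) ^ 2) :=
            Real.sqrt_lt_sqrt hx (sub_lt_self _ one_pos)
        _ = R * Real.cos s := Real.sqrt_sq (by linarith)
    linarith [hα1, hsq]
  intro n hn ρ hρ
  obtain ⟨hρ1, hρ2⟩ := hρ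
  set a := S * ((n:ℝ) * r - ρ) with ha
  set a' := S * (ρ - ((n:ℝ) - 1) * r) with ha'
  have ha0 : 0 ≤ a := mul_nonneg hS0.le (by linarith)
  have ha'0 : 0 ≤ a' := mul_nonneg hS0.le (by linarith)
  have haa : a + a' = s := by rw [ha, ha', hs]; ring
  have has : a ≤ s := by linarith
  have ha's : a' ≤ s := by linarith
  have hsina : 0 ≤ Real.sin a := Real.sin_nonneg_of_nonneg_of_le_pi ha0 (by linarith)
  have hsina' : 0 ≤ Real.sin a' := Real.sin_nonneg_of_nonneg_of_le_pi ha'0 (by linarith)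
  have hcosa' : 0 ≤ Real.cos a' :=
    Real.cos_nonneg_of_mem_Icc ⟨by linarith [Real.pi_pos], by linarith⟩
  have hcosa : Real.cos s ≤ Real.cos a :=
    Real.cos_le_cos_of_nonneg_of_le_pi ha0 (by linarith) has
  set C := α ^ (n - 1) / ((b:ℝ) ^ ((n:ℝ) / 2)) with hC
  have hC0 : 0 < C := div_pos (pow_pos hα0 _) (Real.rpow_pos_of_pos (by linarith) _)
  set E := Real.sqrt b * Real.sin a + α * Real.sin a' with hE
  have hgρ : g n ρ = C * E := by rw [hg n ρ]
  -- positivity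
  have hE0 : 0 < E := by
    rcases eq_or_lt_of_le ha'0 with h | h
    · have haseq : a = s := by linarith
      have : 0 < Real.sin a := by
        rw [haseq]; exact Real.sin_pos_of_pos_of_lt_pi hs0 hsπ
      rw [hE, ← h]
      simp only [Real.sin_zero, mul_zero, add_zero]
      exact mul_pos hsb0 this
    · have : 0 < Real.sin a' := Real.sin_pos_of_pos_of_lt_pi h (by linarith)
      have h2 := mul_pos hα0 this
      rw [hE]
      linarith [mul_nonneg hsb0.le hsina]
  -- upper bound E ≤ √b
  have hEub : E ≤ Real.sqrt b := by
    have haseq : a = s - a' := by linarith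
    rw [hE, haseq, Real.sin_sub]
    have hp1 : Real.sin s * Real.cos a' ≤ 1 :=
      mul_le_one₀ (Real.sin_le_one s) hcosa' (Real.cos_le_one a')
    have hp2 : (α - Real.sqrt b * Real.cos s) * Real.sin a' ≤ 0 :=
      mul_nonpos_of_nonpos_of_nonneg (by linarith) hsina'
    have hq1 := mul_le_mul_of_nonneg_left hp1 hsb0.le
    linarith [hq1, hp2]
  have hrpow : ((b:ℝ) ^ ((n:ℝ) / 2)) = (Real.sqrt b) ^ n := by
    have h0 : (0:ℝ) ≤ b := by linarith
    rw [Real.sqrt_eq_rpow, ← Real.rpow_natCast ((b:ℝ) ^ ((1:ℝ)/2)) n,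
      ← Real.rpow_mul h0]
    ring_nf
  have hn1 : n - 1 + 1 = n := Nat.succ_pred_eq_of_pos hn
  have hCb : C * Real.sqrt b = (α / Real.sqrt b) ^ (n - 1) := by
    rw [hC, hrpow, div_pow, ← hn1, pow_succ]
    field_simp
    ring
    rw [Nat.add_sub_cancel_left]
  have hub : g n ρ ≤ (α / Real.sqrt b) ^ (n - 1) := by
    rw [hgρ, ← hCb]
    exact mul_le_mul_of_nonneg_left hEub hC0.le
  have hone : (α / Real.sqrt b) ^ (n - 1) ≤ 1 :=
    pow_le_one₀ (div_nonneg hα0.le hsb0.le) (by rw [div_le_one hsb0]; linarith)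
  -- derivative
  have hfun : g n = fun x => C *
      (Real.sqrt b * Real.sin (S * ((n:ℝ) * r - x)) +
        α * Real.sin (S * (x - ((n:ℝ) - 1) * r))) := funext fun x => hg n x
  have hd1 : HasDerivAt (fun x : ℝ => S * ((n:ℝ) * r - x)) (S * (-1)) ρ :=
    ((hasDerivAt_id ρ).const_sub ((n:ℝ) * r)).const_mul S
  have hd2 : HasDerivAt (fun x : ℝ => S * (x - ((n:ℝ) - 1) * r)) (S * 1) ρ :=
    ((hasDerivAt_id ρ).sub_const (((n:ℝ) - 1) * r)).const_mul S
  have hds1 : HasDerivAt (fun x : ℝ => Real.sin (S * ((n:ℝ) * r - x)))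
      (Real.cos a * (S * (-1))) ρ := hd1.sin
  have hds2 : HasDerivAt (fun x : ℝ => Real.sin (S * (x - ((n:ℝ) - 1) * r)))
      (Real.cos a' * (S * 1)) ρ := hd2.sin
  have hD : HasDerivAt (g n)
      (C * (Real.sqrt b * (Real.cos a * (S * (-1))) + α * (Real.cos a' * (S * 1)))) ρ := by
    rw [hfun]
    exact (((hds1.const_mul (Real.sqrt b)).add (hds2.const_mul α)).const_mul C)
  have hderiv : deriv (g n) ρ =
      C * (Real.sqrt b * (Real.cos a * (S * (-1))) + α * (Real.cos a' * (S * 1))) :=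
    hD.deriv
  have hdle : deriv (g n) ρ ≤ 0 := by
    rw [hderiv]
    apply mul_nonpos_of_nonneg_of_nonpos hC0.le
    have h1 : α * Real.cos a' ≤ α := mul_le_of_le_one_right hα0.le (Real.cos_le_one a')
    have h2 : Real.sqrt b * Real.cos s ≤ Real.sqrt b * Real.cos a :=
      mul_le_mul_of_nonneg_left hcosa hsb0.le
    have h3 : α * Real.cos a' ≤ Real.sqrt b * Real.cos a := by linarith
    have h4 := mul_le_mul_of_nonneg_right h3 hS0.le
    linarith [h4]
  refine ⟨by rw [hgρ]; exact mul_pos hC0 hE0, hub, hone, hdle⟩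
end

section
/- Let $b\ge2$ be an integer, $r>0$, $R:=\frac{b+1}{2\sqrt b}$, $\theta:=\arccos(1/R)$, and $E_0:=\theta^2/r^2$. For $n\ge1$ define $h_n(\rho):=\sqrt b\,\sin[\sqrt{E_0}(nr-\rho)]+\sin[\sqrt{E_0}(\rho-(n-1)r)]$. Then for every $n\ge1$: (i) $h_n''+E_0\,h_n=0$ on $\mathbb{R}$; (ii) $h_{n+1}(nr)=\sqrt b\,h_n(nr)$; (iii) $h_n'(nr)=\sqrt b\,h_{n+1}'(nr)$; (iv) $h_1'(0)=-\frac{b-1}{b+1}\sqrt{E_0}<0$. -/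
lemma dA (c A : ℝ) (ρ : ℝ) :
    HasDerivAt (fun x => Real.sin (c * (A - x))) (-c * Real.cos (c * (A - ρ))) ρ := by
  have h1 : HasDerivAt (fun x : ℝ => c * (A - x)) (-c) ρ := by
    simpa using ((hasDerivAt_id ρ).const_sub A).const_mul c
  simpa [mul_comm, Function.comp_def] using (Real.hasDerivAt_sin (c * (A - ρ))).comp ρ h1

lemma dB (c B : ℝ) (ρ : ℝ) :
    HasDerivAt (fun x => Real.sin (c * (x - B))) (c * Real.cos (c * (ρ - B))) ρ := by
  have h1 : HasDerivAt (fun x : ℝ => c * (x - B)) c ρ := by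
    simpa using ((hasDerivAt_id ρ).sub_const B).const_mul c
  simpa [mul_comm, Function.comp_def] using (Real.hasDerivAt_sin (c * (ρ - B))).comp ρ h1

lemma dcA (c A : ℝ) (ρ : ℝ) :
    HasDerivAt (fun x => Real.cos (c * (A - x))) (c * Real.sin (c * (A - ρ))) ρ := by
  have h1 : HasDerivAt (fun x : ℝ => c * (A - x)) (-c) ρ := by
    simpa using ((hasDerivAt_id ρ).const_sub A).const_mul c
  have := (Real.hasDerivAt_cos (c * (A - ρ))).comp ρ h1
  exact this.congr_deriv (by ring)

lemma dcB (c B : ℝ) (ρ : ℝ) :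
    HasDerivAt (fun x => Real.cos (c * (x - B))) (-(c * Real.sin (c * (ρ - B)))) ρ := by
  have h1 : HasDerivAt (fun x : ℝ => c * (x - B)) c ρ := by
    simpa using ((hasDerivAt_id ρ).sub_const B).const_mul c
  have := (Real.hasDerivAt_cos (c * (ρ - B))).comp ρ h1
  exact this.congr_deriv (by ring)

lemma key (s c A B : ℝ) (ρ : ℝ) :
    HasDerivAt (fun x => s * Real.sin (c * (A - x)) + Real.sin (c * (x - B)))
      (-(s * c) * Real.cos (c * (A - ρ)) + c * Real.cos (c * (ρ - B))) ρ := by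
  have := ((dA c A ρ).const_mul s).add (dB c B ρ)
  exact this.congr_deriv (by ring)

lemma key2 (s c A B : ℝ) (ρ : ℝ) :
    HasDerivAt (fun x => -(s * c) * Real.cos (c * (A - x)) + c * Real.cos (c * (x - B)))
      (-(c ^ 2) * (s * Real.sin (c * (A - ρ)) + Real.sin (c * (ρ - B)))) ρ := by
  have := ((dcA c A ρ).const_mul (-(s * c))).add ((dcB c B ρ).const_mul c)
  exact this.congr_deriv (by ring)

/-- From Lemma 5.2: the explicit ground-state-type profile
`hₙ(ρ) = √b sin(√E₀(nr-ρ)) + sin(√E₀(ρ-(n-1)r))` satisfies `hₙ'' + E₀ hₙ = 0`, the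
weighted interface conditions `h_{n+1}(nr) = √b hₙ(nr)`, `hₙ'(nr) = √b h_{n+1}'(nr)`,
and `h₁'(0) = -((b-1)/(b+1))√E₀ < 0`. -/
theorem stmt_8 (b : ℕ) (hb : 2 ≤ b) (r : ℝ) (hr : 0 < r)
    (R θ E0 : ℝ)
    (hR : R = ((b : ℝ) + 1) / (2 * Real.sqrt b))
    (hθ : θ = Real.arccos (1 / R))
    (hE0 : E0 = θ ^ 2 / r ^ 2)
    (h : ℕ → ℝ → ℝ)
    (hh : ∀ n : ℕ, ∀ ρ : ℝ, h n ρ =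
      Real.sqrt b * Real.sin (Real.sqrt E0 * ((n : ℝ) * r - ρ)) +
        Real.sin (Real.sqrt E0 * (ρ - ((n : ℝ) - 1) * r))) :
    (∀ n : ℕ, 1 ≤ n → ∀ ρ : ℝ, deriv (deriv (h n)) ρ + E0 * h n ρ = 0) ∧
    (∀ n : ℕ, 1 ≤ n → h (n + 1) ((n : ℝ) * r) = Real.sqrt b * h n ((n : ℝ) * r)) ∧
    (∀ n : ℕ, 1 ≤ n →
      deriv (h n) ((n : ℝ) * r) = Real.sqrt b * deriv (h (n + 1)) ((n : ℝ) * r)) ∧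
    (deriv (h 1) 0 = -(((b : ℝ) - 1) / ((b : ℝ) + 1)) * Real.sqrt E0 ∧
      deriv (h 1) 0 < 0) := by
  set s := Real.sqrt b with hs
  set c := Real.sqrt E0 with hc
  have hb2 : (2 : ℝ) ≤ (b : ℝ) := by exact_mod_cast hb
  have hbpos : (0 : ℝ) < (b : ℝ) := by linarith
  have hs0 : 0 < s := Real.sqrt_pos.mpr hbpos
  have hs2 : s ^ 2 = (b : ℝ) := Real.sq_sqrt hbpos.le
  have hs1 : 1 < s := by
    have := Real.sqrt_lt_sqrt (by norm_num : (0:ℝ) ≤ 1) (by linarith : (1:ℝ) < (b:ℝ))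
    simpa using this
  have hb1 : (0 : ℝ) < (b : ℝ) + 1 := by linarith
  have hb1' : ((b : ℝ) + 1) ≠ 0 := ne_of_gt hb1
  have hRval : 1 / R = 2 * s / ((b : ℝ) + 1) := by
    rw [hR, one_div_div]
  have hle1 : 2 * s / ((b : ℝ) + 1) ≤ 1 := by
    rw [div_le_one hb1]; nlinarith
  have hlt1 : 2 * s / ((b : ℝ) + 1) < 1 := by
    rw [div_lt_one hb1]; nlinarith
  have hge : -1 ≤ 2 * s / ((b : ℝ) + 1) := by
    have h0 : (0:ℝ) ≤ 2 * s / ((b : ℝ) + 1) := by positivity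
    linarith
  have hθpos : 0 < θ := by
    rw [hθ, hRval]; exact Real.arccos_pos.mpr hlt1
  have hcosθ : Real.cos θ = 2 * s / ((b : ℝ) + 1) := by
    rw [hθ, hRval]; exact Real.cos_arccos hge hle1
  have hcval : c = θ / r := by
    rw [hc, hE0, show θ ^ 2 / r ^ 2 = (θ / r) ^ 2 by ring]
    exact Real.sqrt_sq (by positivity)
  have hcr : c * r = θ := by
    rw [hcval]; field_simp
  have hcpos : 0 < c := by rw [hcval]; positivity
  have hcoscr : Real.cos (c * r) = 2 * s / ((b : ℝ) + 1) := by rw [hcr, hcosθ]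
  have hc2 : c ^ 2 = E0 := Real.sq_sqrt (by rw [hE0]; positivity)
  have hfun : ∀ n : ℕ, h n = fun x =>
      s * Real.sin (c * ((n : ℝ) * r - x)) + Real.sin (c * (x - ((n : ℝ) - 1) * r)) :=
    fun n => funext (hh n)
  have hd1 : ∀ n : ℕ, deriv (h n) = fun ρ =>
      -(s * c) * Real.cos (c * ((n : ℝ) * r - ρ)) + c * Real.cos (c * (ρ - ((n : ℝ) - 1) * r)) := by
    intro n; funext ρ; rw [hfun n]
    exact (key s c ((n : ℝ) * r) (((n : ℝ) - 1) * r) ρ).deriv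
  have hd2 : ∀ n : ℕ, ∀ ρ : ℝ, deriv (deriv (h n)) ρ =
      -(c ^ 2) * (s * Real.sin (c * ((n : ℝ) * r - ρ)) +
        Real.sin (c * (ρ - ((n : ℝ) - 1) * r))) := by
    intro n ρ; rw [hd1 n]
    exact (key2 s c ((n : ℝ) * r) (((n : ℝ) - 1) * r) ρ).deriv
  have hD10 : deriv (h 1) 0 = -(((b : ℝ) - 1) / ((b : ℝ) + 1)) * c := by
    rw [hd1]
    push_cast
    rw [show c * ((1 : ℝ) * r - 0) = c * r by ring,
      show c * ((0 : ℝ) - ((1 : ℝ) - 1) * r) = 0 by ring]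
    rw [Real.cos_zero, hcoscr]
    field_simp
    linear_combination (-2) * hs2
  refine ⟨?_, ?_, ?_, hD10, ?_⟩
  · intro n _ ρ
    rw [hd2 n ρ, hh n ρ, ← hc2]; ring
  · intro n _
    rw [hh, hh]
    push_cast
    rw [show c * (((n : ℝ) + 1) * r - (n : ℝ) * r) = c * r by ring,
      show c * ((n : ℝ) * r - ((n : ℝ) + 1 - 1) * r) = 0 by ring,
      show c * ((n : ℝ) * r - (n : ℝ) * r) = 0 by ring,
      show c * ((n : ℝ) * r - ((n : ℝ) - 1) * r) = c * r by ring]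
    simp
  · intro n _
    rw [hd1, hd1]
    push_cast
    rw [show c * ((n : ℝ) * r - (n : ℝ) * r) = 0 by ring,
      show c * ((n : ℝ) * r - ((n : ℝ) - 1) * r) = c * r by ring,
      show c * (((n : ℝ) + 1) * r - (n : ℝ) * r) = c * r by ring,
      show c * ((n : ℝ) * r - ((n : ℝ) + 1 - 1) * r) = 0 by ring]
    rw [Real.cos_zero, hcoscr]
    field_simp
    linear_combination 2 * hs2
  · rw [hD10]
    have hpos : 0 < (((b : ℝ) - 1) / ((b : ℝ) + 1)) * c := by
      apply mul_pos _ hcpos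
      apply div_pos _ hb1
      linarith
    linarith
end

section
/- In the setting of Lemma 5.2 (integer $b\ge2$, $r>0$, $\theta=\arccos\frac{2\sqrt b}{b+1}$, $E_0=\theta^2/r^2$, and $h_n(\rho)=\sqrt b\sin[\sqrt{E_0}(nr-\rho)]+\sin[\sqrt{E_0}(\rho-(n-1)r)]$), for every $n\ge1$ and every $\rho\in[(n-1)r,\,nr]$ one has $0<h_n(\rho)\le\sqrt b\,\sin\theta<\sqrt b$ and $h_n'(\rho)\le-\frac{b-1}{b+1}\sqrt{E_0}<0$. -/
set_option maxHeartbeats 1000000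


/-- From Lemma 5.2: positivity, the uniform bound `0 < hₙ ≤ √b sin θ < √b` and strict
monotonicity `hₙ' ≤ -((b-1)/(b+1))√E₀ < 0` of the ground-state-type profile on each
edge interval. -/
theorem stmt_9 (b : ℕ) (hb : 2 ≤ b) (r : ℝ) (hr : 0 < r)
    (θ E0 : ℝ)
    (hθ : θ = Real.arccos (2 * Real.sqrt b / ((b : ℝ) + 1)))
    (hE0 : E0 = θ ^ 2 / r ^ 2)
    (h : ℕ → ℝ → ℝ)
    (hh : ∀ n : ℕ, ∀ ρ : ℝ, h n ρ =
      Real.sqrt b * Real.sin (Real.sqrt E0 * ((n : ℝ) * r - ρ)) +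
        Real.sin (Real.sqrt E0 * (ρ - ((n : ℝ) - 1) * r))) :
    ∀ n : ℕ, 1 ≤ n → ∀ ρ ∈ Set.Icc (((n : ℝ) - 1) * r) ((n : ℝ) * r),
      (0 < h n ρ ∧ h n ρ ≤ Real.sqrt b * Real.sin θ ∧
        Real.sqrt b * Real.sin θ < Real.sqrt b) ∧
      (deriv (h n) ρ ≤ -(((b : ℝ) - 1) / ((b : ℝ) + 1)) * Real.sqrt E0 ∧
        -(((b : ℝ) - 1) / ((b : ℝ) + 1)) * Real.sqrt E0 < 0) := by
  have hb2 : (2:ℝ) ≤ (b:ℝ) := by exact_mod_cast hb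
  have hbpos : (0:ℝ) < (b:ℝ) := by linarith
  set sb := Real.sqrt b with hsbdef
  have hsb0 : 0 < sb := Real.sqrt_pos.mpr hbpos
  have hss : sb * sb = (b:ℝ) := Real.mul_self_sqrt hbpos.le
  have hsb1 : 1 < sb := by
    nlinarith [hss, hsb0]
  have hc0 : 0 < 2 * sb / ((b:ℝ) + 1) := by positivity
  have hc1 : 2 * sb / ((b:ℝ) + 1) < 1 := by
    rw [div_lt_one (by positivity)]
    nlinarith [sq_nonneg (sb - 1)]
  have hθpos : 0 < θ := hθ ▸ Real.arccos_pos.mpr hc1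
  have hθlt : θ < Real.pi / 2 := hθ ▸ Real.arccos_lt_pi_div_two.mpr hc0
  have hπ : 0 < Real.pi := Real.pi_pos
  have hθπ : θ < Real.pi := by linarith
  have hcosθ : Real.cos θ = 2 * sb / ((b:ℝ) + 1) := by
    rw [hθ]; exact Real.cos_arccos (by linarith) hc1.le
  have hsinθ : 0 < Real.sin θ := Real.sin_pos_of_pos_of_lt_pi hθpos hθπ
  have hsinθ1 : Real.sin θ < 1 := by
    nlinarith [Real.sin_sq_add_cos_sq θ, hcosθ, hc0]
  have hs : Real.sqrt E0 = θ / r := by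
    rw [hE0, show θ ^ 2 / r ^ 2 = (θ / r) ^ 2 by ring]
    exact Real.sqrt_sq (by positivity)
  set s := Real.sqrt E0 with hsdef
  have hs0 : 0 < s := by rw [hs]; positivity
  have hsr : s * r = θ := by rw [hs]; field_simp
  have hsbcosθ : sb * Real.cos θ = 2 * (b:ℝ) / ((b:ℝ) + 1) := by
    rw [hcosθ]; field_simp; nlinarith [hss]
  intro n hn ρ hρ
  obtain ⟨hρ1, hρ2⟩ := hρ
  set u := s * ((n:ℝ) * r - ρ) with hu
  set v := s * (ρ - ((n:ℝ) - 1) * r) with hv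
  have huv : u + v = θ := by rw [hu, hv, ← hsr]; ring
  have hu0 : 0 ≤ u := mul_nonneg hs0.le (by linarith)
  have hv0 : 0 ≤ v := mul_nonneg hs0.le (by linarith)
  have huθ : u ≤ θ := by linarith
  have hvθ : v ≤ θ := by linarith
  have hcosu : Real.cos θ ≤ Real.cos u :=
    Real.cos_le_cos_of_nonneg_of_le_pi hu0 hθπ.le huθ
  have hsinu0 : 0 ≤ Real.sin u := Real.sin_nonneg_of_nonneg_of_le_pi hu0 (by linarith)
  have hsinv0 : 0 ≤ Real.sin v := Real.sin_nonneg_of_nonneg_of_le_pi hv0 (by linarith)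
  have hcosv1 : Real.cos v ≤ 1 := Real.cos_le_one v
  have hval : h n ρ = sb * Real.sin u + Real.sin v := hh n ρ
  constructor
  · refine ⟨?_, ?_, ?_⟩
    · rw [hval]
      by_cases hv' : 0 < v
      · have : 0 < Real.sin v := Real.sin_pos_of_pos_of_lt_pi hv' (by linarith)
        nlinarith [mul_nonneg hsb0.le hsinu0]
      · have hveq : v = 0 := le_antisymm (not_lt.1 hv') hv0
        have hueq : u = θ := by linarith
        rw [hueq, hveq, Real.sin_zero]
        nlinarith [mul_pos hsb0 hsinθ]
    · rw [hval]
      have hX : 1 ≤ sb * Real.cos θ := by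
        rw [hsbcosθ, le_div_iff₀ (by positivity)]; linarith
      have hsineq : Real.sin u = Real.sin θ * Real.cos v - Real.cos θ * Real.sin v := by
        rw [show u = θ - v by linarith, Real.sin_sub]
      rw [hsineq]
      nlinarith [mul_nonneg (mul_nonneg hsb0.le hsinθ.le) (sub_nonneg.2 hcosv1),
        mul_nonneg hsinv0 (sub_nonneg.2 hX)]
    · exact mul_lt_of_lt_one_right hsb0 hsinθ1
  · constructor
    · have hfun : h n = fun x => sb * Real.sin (s * ((n:ℝ) * r - x)) +
          Real.sin (s * (x - ((n:ℝ) - 1) * r)) := funext fun x => hh n x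
      have d1 : HasDerivAt (fun x : ℝ => s * ((n:ℝ) * r - x)) (-s) ρ := by
        simpa using (((hasDerivAt_id ρ).const_sub ((n:ℝ) * r)).const_mul s)
      have d2 : HasDerivAt (fun x : ℝ => s * (x - ((n:ℝ) - 1) * r)) s ρ := by
        simpa using (((hasDerivAt_id ρ).sub_const (((n:ℝ) - 1) * r)).const_mul s)
      have hder : HasDerivAt (h n)
          (sb * (Real.cos u * (-s)) + Real.cos v * (s * 1)) ρ := by
        rw [hfun]
        exact (((Real.hasDerivAt_sin _).comp ρ d1).const_mul sb).add
          ((Real.hasDerivAt_sin _).comp ρ (by simpa using d2))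
      rw [hder.deriv]
      have h1 : 2 * (b:ℝ) / ((b:ℝ) + 1) ≤ sb * Real.cos u :=
        hsbcosθ ▸ mul_le_mul_of_nonneg_left hcosu hsb0.le
      have heq : (1:ℝ) - 2 * (b:ℝ) / ((b:ℝ) + 1) = -(((b:ℝ) - 1) / ((b:ℝ) + 1)) := by
        field_simp
        ring
      have key : Real.cos v - sb * Real.cos u ≤ -(((b:ℝ) - 1) / ((b:ℝ) + 1)) := by
        linarith
      nlinarith [mul_le_mul_of_nonneg_left key hs0.le]
    · have h1 : 0 < ((b:ℝ) - 1) / ((b:ℝ) + 1) := div_pos (by linarith) (by positivity)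
      have := mul_pos h1 hs0
      linarith
end
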